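/- arXiv:1407.8083 — 5 statements merged into one kernel-verified Lean document; each statement's English description precedes it below -/
import Mathlib

section
/- Let C be an n×n real symmetric matrix and S an n×n real symmetric positive definite matrix, and let μ₁ ≥ μ₂ ≥ ... ≥ μₙ be the generalized eigenvalues of the pair (C, S), i.e. the eigenvalues of S^{-1/2} C S^{-1/2}. Then for every full-rank n×m matrix A, trace(AᵀCA (AᵀSA)⁻¹) ≤ μ₁ + ... + μₘ. -/
/-!
With `B = R⁻¹ C R⁻¹` and `T = R A`, the left-hand side is `tr (B P)` for the orthogonal
projection `P = T (Tᵀ T)⁻¹ Tᵀ` onto the column space of `T`, which has trace `m`.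
Writing `B = Qᵀ diag(μ) Q` with `Q` the orthogonal matrix of eigenvectors, `tr (B P) = ∑ μᵢ wᵢ`
where the weights `wᵢ` are the diagonal entries of the projection `Q P Qᵀ`: they lie in `[0, 1]`
and sum to `m`. For antitone `μ` such a weighted sum is at most the sum of the first `m` values,
by comparing each weight with the pivot `μₘ`.
-/

open Matrix

namespace Matrix

theorem IsSymm.diag_mem_Icc_of_isIdempotentElem {K ι : Type*} [CommRing K] [LinearOrder K]
    [IsStrictOrderedRing K] [Fintype ι] {M : Matrix ι ι K} (hM : M.IsSymm)
    (hMM : IsIdempotentElem M) (i : ι) : M i i ∈ Set.Icc 0 1 := by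
  have hsq : M i i = ∑ j, M i j ^ 2 := by
    conv_lhs => rw [← hMM.eq, mul_apply]
    exact Finset.sum_congr rfl fun j _ => by rw [sq, hM.apply]
  have h₀ : 0 ≤ M i i := hsq ▸ Finset.sum_nonneg fun j _ => sq_nonneg _
  have h₁ : M i i ^ 2 ≤ M i i :=
    hsq ▸ Finset.single_le_sum (f := fun j => M i j ^ 2) (fun j _ => sq_nonneg _)
      (Finset.mem_univ i)
  exact ⟨h₀, by nlinarith⟩

section CommRing

variable {K : Type*} [CommRing K] {m n : Type*} [Fintype m] [Fintype n] [DecidableEq n]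

/-- The orthogonal projection onto the column space of `T`, when `Tᵀ * T` is invertible. -/
noncomputable def colProj (T : Matrix m n K) : Matrix m m K := T * (Tᵀ * T)⁻¹ * Tᵀ

theorem isSymm_colProj (T : Matrix m n K) : (colProj T).IsSymm := by
  simp [IsSymm, colProj, transpose_nonsing_inv, Matrix.mul_assoc]

theorem isIdempotentElem_colProj {T : Matrix m n K} (hT : IsUnit (Tᵀ * T).det) :
    IsIdempotentElem (colProj T) := by
  unfold IsIdempotentElem colProj
  calc T * (Tᵀ * T)⁻¹ * Tᵀ * (T * (Tᵀ * T)⁻¹ * Tᵀ)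
      = T * ((Tᵀ * T)⁻¹ * (Tᵀ * T)) * (Tᵀ * T)⁻¹ * Tᵀ := by simp only [Matrix.mul_assoc]
    _ = T * (Tᵀ * T)⁻¹ * Tᵀ := by rw [nonsing_inv_mul _ hT, Matrix.mul_one]

theorem trace_colProj {T : Matrix m n K} (hT : IsUnit (Tᵀ * T).det) :
    (colProj T).trace = Fintype.card n := by
  rw [colProj, trace_mul_comm, ← Matrix.mul_assoc, mul_nonsing_inv _ hT, trace_one]

theorem trace_mul_inv_eq_trace_mul_colProj [DecidableEq m] {R C : Matrix m m K}
    (A : Matrix m n K) (hR : R.IsSymm) (hRdet : IsUnit R.det) :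
    (Aᵀ * C * A * (Aᵀ * (R * R) * A)⁻¹).trace = (R⁻¹ * C * R⁻¹ * colProj (R * A)).trace := by
  have hG : Aᵀ * (R * R) * A = (R * A)ᵀ * (R * A) := by
    rw [transpose_mul, hR.eq]
    simp only [Matrix.mul_assoc]
  have hC : Aᵀ * C * A = (R * A)ᵀ * (R⁻¹ * C * R⁻¹) * (R * A) := by
    rw [transpose_mul, hR.eq]
    simp only [Matrix.mul_assoc, nonsing_inv_mul_cancel_left _ _ hRdet]
    simp only [← Matrix.mul_assoc, mul_nonsing_inv _ hRdet, Matrix.one_mul]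
  rw [hG, hC, colProj]
  generalize R * A = T
  generalize R⁻¹ * C * R⁻¹ = B
  simp only [Matrix.mul_assoc]
  rw [trace_mul_comm Tᵀ]
  simp only [Matrix.mul_assoc]

variable {ι : Type*} [Fintype ι]

theorem IsSymm.mul_mul_transpose {P : Matrix ι ι K} (hP : P.IsSymm) (Q : Matrix ι ι K) :
    (Q * P * Qᵀ).IsSymm := by
  simp [IsSymm, hP.eq, Matrix.mul_assoc]

variable [DecidableEq ι]

theorem _root_.IsIdempotentElem.mul_mul_transpose {P Q : Matrix ι ι K} (hQ : Qᵀ * Q = 1)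
    (hP : IsIdempotentElem P) : IsIdempotentElem (Q * P * Qᵀ) := by
  unfold IsIdempotentElem at hP ⊢
  calc Q * P * Qᵀ * (Q * P * Qᵀ) = Q * (P * (Qᵀ * Q) * P) * Qᵀ := by simp only [Matrix.mul_assoc]
    _ = Q * P * Qᵀ := by rw [hQ, Matrix.mul_one, hP]

theorem trace_mul_mul_transpose {Q : Matrix ι ι K} (hQ : Qᵀ * Q = 1) (P : Matrix ι ι K) :
    (Q * P * Qᵀ).trace = P.trace := by
  rw [trace_mul_comm, ← Matrix.mul_assoc, hQ, Matrix.one_mul]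

theorem trace_mul_eq_sum_mul_diag {B Q : Matrix ι ι K} {mu : ι → K} (hQ : Qᵀ * Q = 1)
    (hB : B * Qᵀ = Qᵀ * diagonal mu) (P : Matrix ι ι K) :
    (B * P).trace = ∑ i, mu i * (Q * P * Qᵀ) i i := by
  have hBQ : B = Qᵀ * diagonal mu * Q := by rw [← hB, Matrix.mul_assoc, hQ, Matrix.mul_one]
  rw [hBQ, Matrix.mul_assoc, Matrix.mul_assoc, trace_mul_comm]
  simp [trace, diagonal_mul, Matrix.mul_assoc]

theorem mul_transpose_of_mulVec_eq_smul {B : Matrix ι ι K} {U : ι → ι → K} {mu : ι → K}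
    (h : ∀ i, B *ᵥ U i = mu i • U i) : B * (of U)ᵀ = (of U)ᵀ * diagonal mu := by
  ext i j
  rw [mul_diagonal]
  simpa [mul_apply, mulVec, dotProduct, mul_comm] using congrFun (h j) i

theorem of_mul_transpose_of_orthonormal {U : ι → ι → K}
    (h : ∀ i j, U i ⬝ᵥ U j = if i = j then 1 else 0) : of U * (of U)ᵀ = 1 := by
  ext i j
  simpa [mul_apply, one_apply, dotProduct] using h i j

end CommRing

theorem isUnit_det_of_rank_eq_card {K n : Type*} [Field K] [Fintype n] [DecidableEq n]
    {M : Matrix n n K} (hM : M.rank = Fintype.card n) : IsUnit M.det := by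
  rw [← isUnit_iff_isUnit_det, ← mulVec_surjective_iff_isUnit]
  refine LinearMap.range_eq_top.mp
    (Submodule.eq_top_of_finrank_eq (S := LinearMap.range M.mulVecLin) ?_)
  rw [← rank, hM, Module.finrank_fintype_fun_eq_card]

theorem isUnit_det_transpose_mul_self {K m n : Type*} [Field K] [LinearOrder K]
    [IsStrictOrderedRing K] [Fintype m] [Fintype n] [DecidableEq n] {A : Matrix m n K}
    (hA : A.rank = Fintype.card n) : IsUnit (Aᵀ * A).det :=
  isUnit_det_of_rank_eq_card (by rw [rank_transpose_mul_self, hA])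

end Matrix

theorem sum_mul_le_sum_castAdd_of_antitone {m k : ℕ} {mu t : Fin (m + k) → ℝ}
    (hmu : Antitone mu) (ht₀ : ∀ i, 0 ≤ t i) (ht₁ : ∀ i, t i ≤ 1) (hsum : ∑ i, t i = m) :
    ∑ i, mu i * t i ≤ ∑ i : Fin m, mu (Fin.castAdd k i) := by
  rcases Nat.eq_zero_or_pos m with rfl | hm
  · have ht (i) : t i = 0 :=
      (Finset.sum_eq_zero_iff_of_nonneg fun i _ => ht₀ i).mp (by simpa using hsum) i
        (Finset.mem_univ i)
    simp [ht]
  set c := mu (Fin.castAdd k ⟨m - 1, by omega⟩)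
  have htop (i : Fin m) : c ≤ mu (Fin.castAdd k i) := hmu (by simp [Fin.le_def]; omega)
  have hbot (j : Fin k) : mu (Fin.natAdd m j) ≤ c := hmu (by simp [Fin.le_def]; omega)
  rw [Fin.sum_univ_add] at hsum ⊢
  have h_top : c * ∑ i : Fin m, (1 - t (Fin.castAdd k i)) ≤
      ∑ i : Fin m, mu (Fin.castAdd k i) * (1 - t (Fin.castAdd k i)) := by
    rw [Finset.mul_sum]
    gcongr with i
    · linarith [ht₁ (Fin.castAdd k i)]
    · exact htop i
  have h_bot : ∑ j : Fin k, mu (Fin.natAdd m j) * t (Fin.natAdd m j) ≤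
      c * ∑ j : Fin k, t (Fin.natAdd m j) := by
    rw [Finset.mul_sum]
    gcongr with j
    · exact ht₀ _
    · exact hbot j
  simp only [mul_sub, mul_one, Finset.sum_sub_distrib, Finset.sum_const, Finset.card_univ,
    Fintype.card_fin, nsmul_eq_mul] at h_top
  have hc : c * m = c * ∑ i : Fin m, t (Fin.castAdd k i) + c * ∑ j : Fin k, t (Fin.natAdd m j) := by
    rw [← hsum, mul_add]
  linarith

theorem gmrq_upper_bound_general (n m : ℕ) (hmn : m ≤ n)
    (C S : Matrix (Fin n) (Fin n) ℝ)
    (R : Matrix (Fin n) (Fin n) ℝ) (hR : R.PosDef) (hRR : R * R = S)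
    (mu : Fin n → ℝ) (hmu : Antitone mu)
    (U : Fin n → Fin n → ℝ)
    (hEig : ∀ i, (R⁻¹ * C * R⁻¹).mulVec (U i) = mu i • U i)
    (hOrtho : ∀ i j, U i ⬝ᵥ U j = if i = j then (1 : ℝ) else 0)
    (A : Matrix (Fin n) (Fin m) ℝ) (hA : A.rank = m) :
    (Aᵀ * C * A * (Aᵀ * S * A)⁻¹).trace ≤ ∑ i : Fin m, mu (Fin.castLE hmn i) := by
  obtain ⟨k, rfl⟩ := Nat.exists_eq_add_of_le hmn
  have hRdet : IsUnit R.det := isUnit_iff_ne_zero.mpr hR.det_pos.ne'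
  have hRA : IsUnit ((R * A)ᵀ * (R * A)).det := isUnit_det_transpose_mul_self <| by
    rw [rank_mul_eq_right_of_isUnit_det _ _ hRdet, hA, Fintype.card_fin]
  have hQ : (of U)ᵀ * of U = 1 := mul_eq_one_comm.mp (of_mul_transpose_of_orthonormal hOrtho)
  set M := of U * colProj (R * A) * (of U)ᵀ
  have hM : M.IsSymm := (isSymm_colProj _).mul_mul_transpose _
  have hMM : IsIdempotentElem M := (isIdempotentElem_colProj hRA).mul_mul_transpose hQ
  have htrM : ∑ i, M i i = m := by
    change M.trace = m
    rw [trace_mul_mul_transpose hQ, trace_colProj hRA, Fintype.card_fin]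
  rw [← hRR, trace_mul_inv_eq_trace_mul_colProj A (isHermitian_iff_isSymm.mp hR.isHermitian) hRdet,
    trace_mul_eq_sum_mul_diag hQ (mul_transpose_of_mulVec_eq_smul hEig)]
  exact sum_mul_le_sum_castAdd_of_antitone hmu
    (fun i => (hM.diag_mem_Icc_of_isIdempotentElem hMM i).1)
    (fun i => (hM.diag_mem_Icc_of_isIdempotentElem hMM i).2) htrM

/-- Subspace variational theorem (finite-dimensional): if `μ₁ ≥ ... ≥ μₙ` are the
generalized eigenvalues of the pair `(C, S)`, i.e. the eigenvalues of
`S^{-1/2} C S^{-1/2}` where `R = S^{1/2}` is the positive definite square root of `S`,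
then for every full-rank `n × m` matrix `A`,
`trace (Aᵀ C A (Aᵀ S A)⁻¹) ≤ μ₁ + ... + μₘ`. -/
theorem gmrq_upper_bound (n m : ℕ) (hmn : m ≤ n)
    (C S : Matrix (Fin n) (Fin n) ℝ) (hC : C.IsSymm) (hS : S.PosDef)
    (R : Matrix (Fin n) (Fin n) ℝ) (hR : R.PosDef) (hRR : R * R = S)
    (mu : Fin n → ℝ) (hmu : Antitone mu)
    (U : Fin n → Fin n → ℝ)
    (hEig : ∀ i, (R⁻¹ * C * R⁻¹).mulVec (U i) = mu i • U i)
    (hOrtho : ∀ i j, U i ⬝ᵥ U j = if i = j then (1 : ℝ) else 0)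
    (A : Matrix (Fin n) (Fin m) ℝ) (hA : A.rank = m) :
    (Aᵀ * C * A * (Aᵀ * S * A)⁻¹).trace ≤ ∑ i : Fin m, mu (Fin.castLE hmn i) :=
  gmrq_upper_bound_general n m hmn C S R hR hRR mu hmu U hEig hOrtho A hA
end

section
/- Let D be a diagonal n×n matrix with diagonal entries λ₁ ≥ λ₂ ≥ ... ≥ λₙ, and let B be an n×m matrix with BᵀB = Iₘ. Then trace(Bᵀ D B) = Σᵢ λᵢ pᵢ where pᵢ = Σⱼ Bᵢⱼ² satisfies 0 ≤ pᵢ ≤ 1 for each i and Σᵢ pᵢ = m; consequently trace(Bᵀ D B) ≤ λ₁ + ... + λₘ. -/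
open Matrix

/-- Diagonal-case reduction for the Ky Fan theorem: if `D = diag (λ₁ ≥ ... ≥ λₙ)` and
`BᵀB = Iₘ`, then `trace (Bᵀ D B) = Σᵢ λᵢ pᵢ` where `pᵢ = Σⱼ Bᵢⱼ²` satisfies
`0 ≤ pᵢ ≤ 1` and `Σᵢ pᵢ = m`; consequently `trace (Bᵀ D B) ≤ λ₁ + ... + λₘ`. -/
theorem ky_fan_diagonal (n m : ℕ) (hmn : m ≤ n)
    (lam : Fin n → ℝ) (hlam : Antitone lam)
    (B : Matrix (Fin n) (Fin m) ℝ) (hB : Bᵀ * B = 1)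
    (p : Fin n → ℝ) (hp : ∀ i, p i = ∑ j : Fin m, (B i j) ^ 2) :
    (Bᵀ * Matrix.diagonal lam * B).trace = ∑ i : Fin n, lam i * p i ∧
    (∀ i, 0 ≤ p i ∧ p i ≤ 1) ∧
    (∑ i : Fin n, p i = m) ∧
    (Bᵀ * Matrix.diagonal lam * B).trace ≤ ∑ i : Fin m, lam (Fin.castLE hmn i) := by
  -- trace formula
  have htr : (Bᵀ * Matrix.diagonal lam * B).trace = ∑ i : Fin n, lam i * p i := by
    simp only [Matrix.trace, Matrix.diag, Matrix.mul_apply, Matrix.transpose_apply,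
      Matrix.diagonal_apply]
    rw [Finset.sum_comm]
    refine Finset.sum_congr rfl fun i _ => ?_
    rw [hp i, Finset.mul_sum]
    refine Finset.sum_congr rfl fun j _ => ?_
    rw [Finset.sum_eq_single i]
    · simp [sq]; ring
    · intro b _ hb; simp [hb]
    · simp
  -- projection P = B * Bᵀ
  set P := B * Bᵀ with hP
  have hPsymm : Pᵀ = P := by
    rw [hP, Matrix.transpose_mul, Matrix.transpose_transpose]
  have hPidem : P * P = P := by
    rw [hP, Matrix.mul_assoc, ← Matrix.mul_assoc Bᵀ, hB, Matrix.one_mul]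
  have hPdiag : ∀ i, P i i = p i := by
    intro i
    simp only [hP, Matrix.mul_apply, Matrix.transpose_apply, hp i, sq]
  have hpbound : ∀ i, 0 ≤ p i ∧ p i ≤ 1 := by
    intro i
    have h0 : 0 ≤ p i := by
      rw [hp i]; exact Finset.sum_nonneg fun j _ => sq_nonneg _
    refine ⟨h0, ?_⟩
    have h1 : p i = ∑ k : Fin n, (P i k) ^ 2 := by
      have := congrArg (fun M => M i i) hPidem
      simp only [Matrix.mul_apply] at this
      rw [← hPdiag i, ← this]
      refine Finset.sum_congr rfl fun k _ => ?_
      have hk : P k i = P i k := by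
        rw [show P k i = Pᵀ i k from rfl, hPsymm]
      rw [hk, sq]
    have h2 : (p i) ^ 2 ≤ p i := by
      have hle : (P i i) ^ 2 ≤ ∑ k : Fin n, (P i k) ^ 2 :=
        Finset.single_le_sum (f := fun k => (P i k) ^ 2) (fun k _ => sq_nonneg _)
          (Finset.mem_univ i)
      rw [hPdiag i, ← h1] at hle
      exact hle
    nlinarith
  have hsum : ∑ i : Fin n, p i = m := by
    have : P.trace = (Bᵀ * B).trace := Matrix.trace_mul_comm B Bᵀ
    rw [hB, Matrix.trace_one] at this
    have htrP : P.trace = ∑ i : Fin n, p i := by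
      simp only [Matrix.trace, Matrix.diag]
      exact Finset.sum_congr rfl fun i _ => hPdiag i
    rw [← htrP, this]
    simp
  refine ⟨htr, hpbound, hsum, ?_⟩
  rw [htr]
  -- majorization bound
  rcases Nat.eq_zero_or_pos m with hm0 | hm
  · subst hm0
    have : ∀ i, p i = 0 := by
      intro i; rw [hp i]; simp
    simp [this]
  · set c := lam (Fin.castLE hmn ⟨m - 1, Nat.sub_lt hm one_pos⟩) with hc
    have key : ∀ i : Fin n, lam i * p i ≤ c * p i + (lam i - c) * (if (i : ℕ) < m then 1 else 0) := by
      intro i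
      by_cases h : (i : ℕ) < m
      · simp only [h, if_true]
        have hlc : c ≤ lam i := by
          apply hlam
          simp only [Fin.le_def, Fin.coe_castLE]
          omega
        have hp1 : p i ≤ 1 := (hpbound i).2
        nlinarith
      · simp only [h, if_false]
        have hlc : lam i ≤ c := by
          apply hlam
          simp only [Fin.le_def, Fin.coe_castLE]
          omega
        have hp0 : 0 ≤ p i := (hpbound i).1
        nlinarith
    calc ∑ i : Fin n, lam i * p i
        ≤ ∑ i : Fin n, (c * p i + (lam i - c) * (if (i : ℕ) < m then 1 else 0)) :=
          Finset.sum_le_sum fun i _ => key i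
      _ = c * m + ∑ i : Fin n, (lam i - c) * (if (i : ℕ) < m then 1 else 0) := by
          rw [Finset.sum_add_distrib, ← Finset.mul_sum, hsum]
      _ = c * m + ∑ i : Fin m, (lam (Fin.castLE hmn i) - c) := by
          congr 1
          have hrw : ∀ i : Fin n, (lam i - c) * (if (i : ℕ) < m then 1 else 0)
              = if (i : ℕ) < m then lam i - c else 0 := by
            intro i; split <;> simp
          simp only [hrw]
          rw [← Finset.sum_filter]
          refine (Finset.sum_nbij' (i := fun (i : Fin m) => Fin.castLE hmn i)
            (j := fun (i : Fin n) => (⟨(i : ℕ) % m, Nat.mod_lt _ hm⟩ : Fin m))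
            (fun a _ => Finset.mem_filter.mpr ⟨Finset.mem_univ _, a.isLt⟩)
            (fun a _ => Finset.mem_univ _)
            ?_ ?_ (fun a _ => rfl)).symm
          · intro a _
            ext
            simp [Nat.mod_eq_of_lt a.isLt]
          · intro a ha
            have : (a : ℕ) < m := (Finset.mem_filter.mp ha).2
            ext
            simp [Nat.mod_eq_of_lt this]
      _ = ∑ i : Fin m, lam (Fin.castLE hmn i) := by
          rw [Finset.sum_sub_distrib]
          simp
          ring
end

section
/- Let P be a compact self-adjoint positive operator on a separable real Hilbert space with orthonormal eigenbasis (φᵢ) and eigenvalues λ₁ ≥ λ₂ ≥ ... ≥ 0. For any m orthonormal vectors f₁,...,fₘ, Σᵢ₌₁ᵐ ⟨fᵢ, P fᵢ⟩ ≤ Σᵢ₌₁ᵐ λᵢ. -/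
/-!
Expand `P` in the eigenbasis: `⟪f i, P (f i)⟫ = ∑ⱼ lam j ⟪φ j, f i⟫²`, so the left-hand side is
`∑ⱼ lam j * t j` with weights `t j = ∑ᵢ ⟪φ j, f i⟫²`. By Bessel's inequality `0 ≤ t j ≤ 1`,
and by Parseval `∑ⱼ t j = m`. For antitone `lam`, such a weighted sum is largest when the
whole mass sits on the first `m` indices: `lam j * t j ≤ lam m * t j + (lam j - lam m)` for
`j < m` and `lam j * t j ≤ lam m * t j` otherwise.
-/

open Finset

theorem Antitone.le_sum_range_of_hasSum_mul {lam t : ℕ → ℝ} (hlam : Antitone lam)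
    (ht₀ : ∀ j, 0 ≤ t j) (ht₁ : ∀ j, t j ≤ 1) {m : ℕ} (ht : HasSum t m) {S : ℝ}
    (hS : HasSum (fun j => lam j * t j) S) : S ≤ ∑ j ∈ range m, lam j := by
  have hexcess : HasSum (fun j => if j < m then lam j - lam m else 0)
      (∑ j ∈ range m, (lam j - lam m)) := by
    convert hasSum_sum_of_ne_finset_zero (L := .unconditional ℕ) (s := range m)
      (f := fun j => if j < m then lam j - lam m else 0) (by simp_all) using 1
    exact sum_congr rfl fun j hj => by simp_all
  have hle : ∀ j, lam j * t j ≤ lam m * t j + if j < m then lam j - lam m else 0 := by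
    intro j
    split_ifs with hj
    · nlinarith [hlam hj.le, ht₁ j]
    · nlinarith [hlam (not_lt.mp hj), ht₀ j]
  calc S ≤ lam m * m + ∑ j ∈ range m, (lam j - lam m) :=
        hasSum_le hle hS ((ht.mul_left _).add hexcess)
    _ = ∑ j ∈ range m, lam j := by simp [sum_sub_distrib]; ring

section RealInnerProductSpace

variable {ι κ H : Type*} [NormedAddCommGroup H] [InnerProductSpace ℝ H]

theorem Orthonormal.sum_sq_inner_le_norm_sq [Fintype κ] {f : κ → H} (hf : Orthonormal ℝ f)
    (x : H) : ∑ i, inner ℝ x (f i) ^ 2 ≤ ‖x‖ ^ 2 := by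
  simpa [Real.norm_eq_abs, sq_abs, real_inner_comm x] using hf.sum_inner_products_le x

namespace HilbertBasis

variable (b : HilbertBasis ι ℝ H)

theorem hasSum_sq_inner (x : H) : HasSum (fun j => inner ℝ (b j) x ^ 2) (‖x‖ ^ 2) := by
  simpa [← real_inner_self_eq_norm_sq, real_inner_comm x, sq] using b.hasSum_inner_mul_inner x x

theorem hasSum_mul_sq_inner_of_apply_eq_smul {T : H →ₗ[ℝ] H} (hT : T.IsSymmetric) {μ : ι → ℝ}
    (hμ : ∀ j, T (b j) = μ j • b j) (x : H) :
    HasSum (fun j => μ j * inner ℝ (b j) x ^ 2) (inner ℝ x (T x)) := by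
  refine (b.hasSum_inner_mul_inner x (T x)).congr_fun fun j => ?_
  rw [← hT, hμ, real_inner_smul_left, real_inner_comm x]
  ring

variable [Fintype κ] {f : κ → H}

theorem hasSum_sum_sq_inner_of_orthonormal (hf : Orthonormal ℝ f) :
    HasSum (fun j => ∑ i, inner ℝ (b j) (f i) ^ 2) (Fintype.card κ) := by
  have h := hasSum_sum (s := univ) fun i _ => b.hasSum_sq_inner (f i)
  simp only [hf.1, one_pow, sum_const, nsmul_eq_mul, mul_one] at h
  exact h

theorem hasSum_mul_sum_sq_inner_of_apply_eq_smul {T : H →ₗ[ℝ] H} (hT : T.IsSymmetric)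
    {μ : ι → ℝ} (hμ : ∀ j, T (b j) = μ j • b j) :
    HasSum (fun j => μ j * ∑ i, inner ℝ (b j) (f i) ^ 2) (∑ i, inner ℝ (f i) (T (f i))) := by
  simpa [mul_sum] using
    hasSum_sum fun i _ => b.hasSum_mul_sq_inner_of_apply_eq_smul hT hμ (f i)

end HilbertBasis

end RealInnerProductSpace

theorem trace_variational_inequality_general
    {H : Type*} [NormedAddCommGroup H] [InnerProductSpace ℝ H] [CompleteSpace H]
    (P : H →L[ℝ] H) (hP : IsSelfAdjoint P)
    (lam : ℕ → ℝ) (hlam : Antitone lam)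
    (φ : ℕ → H) (hφo : Orthonormal ℝ φ)
    (hEig : ∀ i, P (φ i) = lam i • φ i)
    (hspan : Dense (↑(Submodule.span ℝ (Set.range φ)) : Set H))
    (m : ℕ) (f : Fin m → H) (hf : Orthonormal ℝ f) :
    ∑ i : Fin m, (inner ℝ (f i) (P (f i)) : ℝ) ≤ ∑ i : Fin m, lam i := by
  obtain ⟨b, rfl⟩ : ∃ b : HilbertBasis ℕ ℝ H, ⇑b = φ :=
    ⟨.mk hφo (Submodule.dense_iff_topologicalClosure_eq_top.mp hspan).ge, HilbertBasis.coe_mk _ _⟩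
  have hweights := b.hasSum_sum_sq_inner_of_orthonormal hf
  have hrayleigh := b.hasSum_mul_sum_sq_inner_of_apply_eq_smul (f := f) hP.isSymmetric hEig
  have hbessel : ∀ j, ∑ i, inner ℝ (b j) (f i) ^ 2 ≤ 1 := fun j => by
    simpa [b.orthonormal.1 j] using hf.sum_sq_inner_le_norm_sq (b j)
  rw [Fintype.card_fin] at hweights
  simpa [Fin.sum_univ_eq_sum_range] using
    hlam.le_sum_range_of_hasSum_mul (fun j => sum_nonneg fun i _ => sq_nonneg _) hbessel
      hweights hrayleigh

/-- Infinite-dimensional Ky Fan / trace variational inequality: for a compact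
self-adjoint positive operator `P` on a separable real Hilbert space with orthonormal
eigenbasis `φ` (dense span) and eigenvalues `lam 0 ≥ lam 1 ≥ ... ≥ 0`, and any
orthonormal family `f 0, ..., f (m-1)`,
`Σᵢ ⟪f i, P (f i)⟫ ≤ Σᵢ lam i`. -/
theorem trace_variational_inequality
    {H : Type*} [NormedAddCommGroup H] [InnerProductSpace ℝ H] [CompleteSpace H]
    [TopologicalSpace.SeparableSpace H]
    (P : H →L[ℝ] H) (hP : IsSelfAdjoint P) (hPc : IsCompactOperator ⇑P)
    (lam : ℕ → ℝ) (hlam : Antitone lam) (hnonneg : ∀ i, 0 ≤ lam i)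
    (φ : ℕ → H) (hφo : Orthonormal ℝ φ)
    (hEig : ∀ i, P (φ i) = lam i • φ i)
    (hspan : Dense (↑(Submodule.span ℝ (Set.range φ)) : Set H))
    (m : ℕ) (f : Fin m → H) (hf : Orthonormal ℝ f) :
    ∑ i : Fin m, (inner ℝ (f i) (P (f i)) : ℝ) ≤ ∑ i : Fin m, lam i :=
  trace_variational_inequality_general P hP lam hlam φ hφo hEig hspan m f hf
end

section
/- Let P be a compact self-adjoint operator on a Hilbert space with eigenvalues λᵢ sorted descending and orthonormal eigenvectors φᵢ, and let f₁,...,fₘ be linearly independent vectors whose span equals the span of φ₁,...,φₘ. Then, with P_{ij} = ⟨fᵢ, P fⱼ⟩ and Q_{ij} = ⟨fᵢ, fⱼ⟩, one has trace(P Q⁻¹) = λ₁ + ... + λₘ. -/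
open Matrix

/- Expanding `f j = ∑ₖ C k j • φ k` in the orthonormal eigenvectors gives `Q = Cᴴ C` and
`Pmat = Cᴴ Λ C` with `Λ = diagonal λ`. Since `Q` is invertible, so are `C` and `Cᴴ`,
hence `Pmat Q⁻¹ = Cᴴ Λ (Cᴴ)⁻¹`, a conjugate of `Λ`, whose trace is `λ₀ + ⋯ + λₘ₋₁`. -/

theorem Submodule.exists_matrix_of_span_le_span {R M ι κ : Type*} [CommSemiring R]
    [AddCommMonoid M] [Module R M] [Fintype ι] {f : κ → M} {b : ι → M}
    (h : Submodule.span R (Set.range f) ≤ Submodule.span R (Set.range b)) :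
    ∃ C : Matrix ι κ R, ∀ j, f j = ∑ k, C k j • b k := by
  choose c hc using fun j =>
    (Submodule.mem_span_range_iff_exists_fun R).mp (h (Submodule.subset_span ⟨j, rfl⟩))
  exact ⟨.of fun k j => c j k, fun j => (hc j).symm⟩

theorem Orthonormal.inner_sum_smul_sum_smul {𝕜 H ι κ : Type*} [RCLike 𝕜]
    [NormedAddCommGroup H] [InnerProductSpace 𝕜 H] [Fintype ι] {b : ι → H} (hb : Orthonormal 𝕜 b)
    (C D : Matrix ι κ 𝕜) (i j : κ) :
    inner 𝕜 (∑ k, C k i • b k) (∑ k, D k j • b k) = (Cᴴ * D) i j := by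
  simp [hb.inner_sum, mul_apply]

theorem LinearMap.map_sum_smul_of_eigenvectors {R M ι κ : Type*} [CommSemiring R]
    [AddCommMonoid M] [Module R M] [Fintype ι] [DecidableEq ι] (T : M →ₗ[R] M)
    {b : ι → M} {lam : ι → R} (hT : ∀ k, T (b k) = lam k • b k) (C : Matrix ι κ R) (j : κ) :
    T (∑ k, C k j • b k) = ∑ k, (diagonal lam * C) k j • b k := by
  simp [hT, smul_smul, mul_comm]

theorem Matrix.trace_mul_mul_mul_inv_mul {R n : Type*} [CommRing R] [Fintype n]
    [DecidableEq n] (A Λ C : Matrix n n R) (hAC : IsUnit (A * C).det) :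
    (A * Λ * C * (A * C)⁻¹).trace = Λ.trace := by
  rw [det_mul] at hAC
  rw [mul_inv_rev, ← mul_assoc, mul_assoc _ C,
    mul_nonsing_inv _ (isUnit_of_mul_isUnit_right hAC), mul_one, trace_mul_cycle,
    nonsing_inv_mul _ (isUnit_of_mul_isUnit_left hAC), one_mul]

theorem gmrq_equality_on_leading_eigenspace_general
    {H : Type*} [NormedAddCommGroup H] [InnerProductSpace ℝ H]
    (P : H →L[ℝ] H)
    (lam : ℕ → ℝ)
    (φ : ℕ → H) (hφo : Orthonormal ℝ φ)
    (hEig : ∀ i, P (φ i) = lam i • φ i)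
    (m : ℕ) (f : Fin m → H) (hfli : LinearIndependent ℝ f)
    (hspan : Submodule.span ℝ (Set.range f)
      = Submodule.span ℝ (Set.range fun i : Fin m => φ i))
    (Pmat Q : Matrix (Fin m) (Fin m) ℝ)
    (hPmat : ∀ i j, Pmat i j = (inner ℝ (f i) (P (f j)) : ℝ))
    (hQ : ∀ i j, Q i j = (inner ℝ (f i) (f j) : ℝ)) :
    (Pmat * Q⁻¹).trace = ∑ i : Fin m, lam i := by
  have hb : Orthonormal ℝ fun i : Fin m => φ i := hφo.comp _ Fin.val_injective
  obtain ⟨C, hC⟩ := Submodule.exists_matrix_of_span_le_span hspan.le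
  have hPf (j : Fin m) : P (f j) = ∑ k, (diagonal (fun k : Fin m => lam k) * C) k j • φ k := by
    rw [hC j]
    exact P.toLinearMap.map_sum_smul_of_eigenvectors (b := fun k : Fin m => φ k) (hEig ·) C j
  have hQC : Q = Cᴴ * C := by
    ext i j
    rw [hQ, hC, hC, hb.inner_sum_smul_sum_smul]
  have hPC : Pmat = Cᴴ * diagonal (fun k : Fin m => lam k) * C := by
    ext i j
    rw [hPmat, hPf, hC, hb.inner_sum_smul_sum_smul, mul_assoc]
  have hQdet : IsUnit Q.det := by
    rw [isUnit_iff_ne_zero, show Q = gram ℝ f from Matrix.ext hQ]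
    exact det_gram_ne_zero_iff_linearIndependent.mpr hfli
  rw [hPC, hQC, trace_mul_mul_mul_inv_mul _ _ _ (hQC ▸ hQdet), trace_diagonal]

/-- Equality case (Lemma 1) of the subspace variational theorem: if `f 0, ..., f (m-1)`
are linearly independent vectors spanning the same subspace as the top `m` orthonormal
eigenvectors `φ 0, ..., φ (m-1)` of a compact self-adjoint operator `P` with
descending eigenvalues `lam`, then with `Pmat i j = ⟪f i, P (f j)⟫` and
`Q i j = ⟪f i, f j⟫`, one has `trace (Pmat Q⁻¹) = lam 0 + ... + lam (m-1)`. -/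
theorem gmrq_equality_on_leading_eigenspace
    {H : Type*} [NormedAddCommGroup H] [InnerProductSpace ℝ H] [CompleteSpace H]
    (P : H →L[ℝ] H) (hP : IsSelfAdjoint P) (hPc : IsCompactOperator ⇑P)
    (lam : ℕ → ℝ) (hlam : Antitone lam)
    (φ : ℕ → H) (hφo : Orthonormal ℝ φ)
    (hEig : ∀ i, P (φ i) = lam i • φ i)
    (m : ℕ) (f : Fin m → H) (hfli : LinearIndependent ℝ f)
    (hspan : Submodule.span ℝ (Set.range f)
      = Submodule.span ℝ (Set.range fun i : Fin m => φ i))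
    (Pmat Q : Matrix (Fin m) (Fin m) ℝ)
    (hPmat : ∀ i j, Pmat i j = (inner ℝ (f i) (P (f j)) : ℝ))
    (hQ : ∀ i j, Q i j = (inner ℝ (f i) (f j) : ℝ)) :
    (Pmat * Q⁻¹).trace = ∑ i : Fin m, lam i :=
  gmrq_equality_on_leading_eigenspace_general P lam φ hφo hEig m f hfli hspan Pmat Q hPmat hQ
end

section
/- Let T be a self-adjoint operator on an n-dimensional real inner product space with eigenvalues λ₁ ≥ ... ≥ λₙ ≥ 0 and let Tₘ be its rank-m spectral truncation. For every linear operator A of rank at most m, ‖T - A‖ ≥ λ_{m+1} = ‖T - Tₘ‖, so Tₘ is a best rank-m approximation in operator norm. -/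
/-!
An operator diagonal in an orthonormal basis stretches a vector supported on a set `s` of basis
indices by at least `min_{i ∈ s} |eigenvalue|`, and any vector by at most `max_i |eigenvalue|`.
An operator `A` of rank at most `m` kills some nonzero `w` in the `(m + 1)`-dimensional span of
`b 0, …, b m`, where `T` stretches by at least `λ_m`, so `λ_m ‖w‖ ≤ ‖T w‖ = ‖(T - A) w‖`.
The eigenvalues of `T - Tm` are `0, …, 0, λ_m, …, λ_{n-1}`, of largest absolute value `λ_m`.
-/

open RealInnerProductSpace Module Submodule

theorem LinearMap.exists_mem_ne_zero_map_eq_zero_of_finrank_range_lt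
    {K V V₂ : Type*} [DivisionRing K] [AddCommGroup V] [Module K V] [AddCommGroup V₂]
    [Module K V₂] [FiniteDimensional K V] (f : V →ₗ[K] V₂) {W : Submodule K V}
    (h : finrank K (LinearMap.range f) < finrank K W) : ∃ w ∈ W, w ≠ 0 ∧ f w = 0 := by
  let g : W →ₗ[K] LinearMap.range f :=
    (f.domRestrict W).codRestrict _ fun w => LinearMap.mem_range_self f w
  obtain ⟨w, hw, hw0⟩ :=
    exists_mem_ne_zero_of_ne_bot (LinearMap.ker_ne_bot_of_finrank_lt (f := g) h)
  exact ⟨w, w.2, by simpa using hw0, congrArg Subtype.val hw⟩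

namespace OrthonormalBasis

variable {ι E : Type*} [Fintype ι] [NormedAddCommGroup E] [InnerProductSpace ℝ E]
  (b : OrthonormalBasis ι ℝ E) {S : E →L[ℝ] E} {d : ι → ℝ}

theorem inner_apply_of_apply_eq_smul (hS : ∀ i, S (b i) = d i • b i) (i : ι) (v : E) :
    ⟪b i, S v⟫ = d i * ⟪b i, v⟫ := by
  conv_lhs => rw [← b.sum_repr' v]
  simp only [map_sum, map_smul, hS, smul_smul]
  rw [b.orthonormal.inner_right_fintype, mul_comm]

theorem norm_apply_sq_of_apply_eq_smul (hS : ∀ i, S (b i) = d i • b i) (v : E) :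
    ‖S v‖ ^ 2 = ∑ i, (d i * ⟪b i, v⟫) ^ 2 := by
  simp_rw [← b.sum_sq_inner_right, b.inner_apply_of_apply_eq_smul hS]

theorem inner_eq_zero_of_mem_span_image {s : Set ι} {i : ι} (hi : i ∉ s) {w : E}
    (hw : w ∈ span ℝ (b '' s)) : ⟪b i, w⟫ = 0 := by
  obtain ⟨l, hl, rfl⟩ := (Finsupp.mem_span_image_iff_linearCombination ℝ).1 hw
  rw [real_inner_comm]
  exact b.orthonormal.inner_finsupp_eq_zero hi hl

theorem mul_norm_le_norm_apply_of_mem_span (hS : ∀ i, S (b i) = d i • b i) {s : Set ι}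
    {c : ℝ} (hc₀ : 0 ≤ c) (hc : ∀ i ∈ s, c ≤ |d i|) {w : E} (hw : w ∈ span ℝ (b '' s)) :
    c * ‖w‖ ≤ ‖S w‖ := by
  refine (sq_le_sq₀ (by positivity) (norm_nonneg _)).1 ?_
  rw [b.norm_apply_sq_of_apply_eq_smul hS, mul_pow, ← b.sum_sq_inner_right w, Finset.mul_sum]
  refine Finset.sum_le_sum fun i _ => ?_
  by_cases hi : i ∈ s
  · rw [mul_pow]
    exact mul_le_mul_of_nonneg_right
      (sq_le_sq.2 (by rw [abs_of_nonneg hc₀]; exact hc i hi)) (sq_nonneg _)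
  · simp [b.inner_eq_zero_of_mem_span_image hi hw]

theorem opNorm_le_of_apply_eq_smul (hS : ∀ i, S (b i) = d i • b i) {c : ℝ} (hc₀ : 0 ≤ c)
    (hc : ∀ i, |d i| ≤ c) : ‖S‖ ≤ c := by
  refine S.opNorm_le_bound hc₀ fun v => (sq_le_sq₀ (norm_nonneg _) (by positivity)).1 ?_
  rw [b.norm_apply_sq_of_apply_eq_smul hS, mul_pow, ← b.sum_sq_inner_right v, Finset.mul_sum]
  refine Finset.sum_le_sum fun i _ => ?_
  rw [mul_pow]
  exact mul_le_mul_of_nonneg_right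
    (sq_le_sq.2 (by rw [abs_of_nonneg hc₀]; exact hc i)) (sq_nonneg _)

theorem abs_le_opNorm_of_apply_eq_smul (hS : ∀ i, S (b i) = d i • b i) (i : ι) :
    |d i| ≤ ‖S‖ := by
  simpa [hS, norm_smul, b.orthonormal.1 i] using S.unit_le_opNorm (b i) (b.orthonormal.1 i).le

theorem le_opNorm_sub_of_finrank_range_lt (hS : ∀ i, S (b i) = d i • b i) {s : Finset ι}
    {c : ℝ} (hc₀ : 0 ≤ c) (hc : ∀ i ∈ s, c ≤ |d i|) (A : E →L[ℝ] E)
    (hA : finrank ℝ (LinearMap.range A.toLinearMap) < s.card) : c ≤ ‖S - A‖ := by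
  have : FiniteDimensional ℝ E := .of_basis b.toBasis
  have hW : finrank ℝ (span ℝ (b '' s)) = s.card := by
    rw [Set.image_eq_range, finrank_span_eq_card]
    · exact Fintype.card_coe s
    · exact b.orthonormal.linearIndependent.comp (fun i : s ↦ i.val) Subtype.val_injective
  obtain ⟨w, hwW, hw0, hAw⟩ :=
    A.toLinearMap.exists_mem_ne_zero_map_eq_zero_of_finrank_range_lt (hW ▸ hA)
  have : c * ‖w‖ ≤ ‖S - A‖ * ‖w‖ := calc
    c * ‖w‖ ≤ ‖S w‖ := b.mul_norm_le_norm_apply_of_mem_span hS hc₀ hc hwW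
    _ = ‖(S - A) w‖ := by rw [sub_apply, show A w = 0 from hAw, sub_zero]
    _ ≤ ‖S - A‖ * ‖w‖ := (S - A).le_opNorm w
  exact le_of_mul_le_mul_right this (norm_pos_iff.2 hw0)

end OrthonormalBasis

theorem OrthonormalBasis.apply_eq_ite_smul_of_eq_sum_castLE {E : Type*} [NormedAddCommGroup E]
    [InnerProductSpace ℝ E] {n m : ℕ} (b : OrthonormalBasis (Fin n) ℝ E) (h : m ≤ n)
    (lam : Fin n → ℝ) (Tm : E →L[ℝ] E)
    (hTm : ∀ v, Tm v = ∑ i : Fin m,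
      (lam (Fin.castLE h i) * ⟪v, b (Fin.castLE h i)⟫) • b (Fin.castLE h i)) (j : Fin n) :
    Tm (b j) = (if (j : ℕ) < m then lam j else 0) • b j := by
  rw [hTm]
  split_ifs with hj
  · rw [Finset.sum_eq_single ⟨j, hj⟩]
    · simp [b.orthonormal.1 j]
    · intro i _ hi
      rw [b.orthonormal.inner_eq_zero (by simpa [Fin.ext_iff, eq_comm] using hi), mul_zero,
        zero_smul]
    · simp
  · rw [zero_smul]
    refine Finset.sum_eq_zero fun i _ => ?_
    rw [b.orthonormal.inner_eq_zero fun hji => hj (by rw [hji]; exact i.isLt), mul_zero,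
      zero_smul]

theorem eckart_young_operator_norm_general
    {E : Type*} [NormedAddCommGroup E] [InnerProductSpace ℝ E]
    (n m : ℕ) (hmn : m < n)
    (b : OrthonormalBasis (Fin n) ℝ E)
    (T : E →L[ℝ] E)
    (lam : Fin n → ℝ) (hlam : Antitone lam) (hnonneg : ∀ i, 0 ≤ lam i)
    (hEig : ∀ i, T (b i) = lam i • b i)
    (Tm : E →L[ℝ] E)
    (hTm : ∀ v, Tm v = ∑ i : Fin m,
      (lam (Fin.castLE hmn.le i) * (inner ℝ v (b (Fin.castLE hmn.le i)) : ℝ))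
        • b (Fin.castLE hmn.le i)) :
    ∀ A : E →L[ℝ] E, Module.finrank ℝ (LinearMap.range A.toLinearMap) ≤ m →
      lam ⟨m, hmn⟩ ≤ ‖T - A‖ ∧ ‖T - Tm‖ = lam ⟨m, hmn⟩ := by
  intro A hA
  have hTsub : ∀ i, (T - Tm) (b i) = (if (i : ℕ) < m then 0 else lam i) • b i := by
    intro i
    rw [sub_apply, hEig, b.apply_eq_ite_smul_of_eq_sum_castLE hmn.le lam Tm hTm]
    split_ifs <;> simp
  refine ⟨?_, le_antisymm ?_ ?_⟩
  · refine b.le_opNorm_sub_of_finrank_range_lt hEig (s := Finset.Iic ⟨m, hmn⟩) (hnonneg _)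
      (fun i hi => (hlam (Finset.mem_Iic.1 hi)).trans (le_abs_self _)) A ?_
    rw [Fin.card_Iic]
    exact Nat.lt_succ_of_le hA
  · refine b.opNorm_le_of_apply_eq_smul hTsub (hnonneg _) fun i => ?_
    split_ifs with hi
    · simpa using hnonneg _
    · rw [abs_of_nonneg (hnonneg i)]
      exact hlam (Fin.mk_le_of_le_val (by omega))
  · simpa [abs_of_nonneg (hnonneg _)] using b.abs_le_opNorm_of_apply_eq_smul hTsub ⟨m, hmn⟩

/-- Eckart–Young–Schmidt for symmetric positive semidefinite operators in operator
norm: for a self-adjoint operator `T` with eigenvalues `lam 0 ≥ ... ≥ lam (n-1) ≥ 0`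
and rank-`m` spectral truncation `Tm`, every operator `A` of rank at most `m`
satisfies `‖T - A‖ ≥ lam m = ‖T - Tm‖`. -/
theorem eckart_young_operator_norm
    {E : Type*} [NormedAddCommGroup E] [InnerProductSpace ℝ E] [FiniteDimensional ℝ E]
    (n m : ℕ) (hmn : m < n)
    (b : OrthonormalBasis (Fin n) ℝ E)
    (T : E →L[ℝ] E) (hT : IsSelfAdjoint T)
    (lam : Fin n → ℝ) (hlam : Antitone lam) (hnonneg : ∀ i, 0 ≤ lam i)
    (hEig : ∀ i, T (b i) = lam i • b i)
    (Tm : E →L[ℝ] E)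
    (hTm : ∀ v, Tm v = ∑ i : Fin m,
      (lam (Fin.castLE hmn.le i) * (inner ℝ v (b (Fin.castLE hmn.le i)) : ℝ))
        • b (Fin.castLE hmn.le i)) :
    ∀ A : E →L[ℝ] E, Module.finrank ℝ (LinearMap.range A.toLinearMap) ≤ m →
      lam ⟨m, hmn⟩ ≤ ‖T - A‖ ∧ ‖T - Tm‖ = lam ⟨m, hmn⟩ :=
  eckart_young_operator_norm_general n m hmn b T lam hlam hnonneg hEig Tm hTm
end
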